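/- Let M be a topological space with an exhaustion by compact sets K₁ ⊆ K₂ ⊆ ⋯ with ⋃ⱼ Kⱼ = M and each Kⱼ contained in the interior of K_{j+1}. Let u : M → ℝⁿ be continuous. If there is a strictly increasing sequence (n_k) of naturals with inf over the topological boundary ∂K_{n_k} of |u| tending to +∞ as k → ∞, then u is almost proper: every connected component of the preimage of each compact subset of ℝⁿ is compact. -/
import Mathlib


open Filter Topology

lemma isClosed_connectedComponentIn' {α : Type*} [TopologicalSpace α] {F : Set α}
    (hF : IsClosed F) {x : α} (hx : x ∈ F) : IsClosed (connectedComponentIn F x) := by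
  rw [connectedComponentIn_eq_image hx]
  exact hF.isClosedEmbedding_subtypeVal.isClosedMap _ isClosed_connectedComponent

/-- Let M have an exhaustion by compact sets K_j (each contained in the interior
of the next, covering M) and u : M → ℝⁿ continuous. If there is a strictly
increasing sequence (n_k) such that the infimum of |u| over the boundary of
K_{n_k} tends to +∞, then u is almost proper: every connected component of the
preimage of a compact set is compact. -/
theorem stmt_16 {M : Type*} [TopologicalSpace M] {n : ℕ}
    (K : ℕ → Set M) (hcomp : ∀ j, IsCompact (K j))
    (hsub : ∀ j, K j ⊆ interior (K (j + 1)))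
    (hcover : (⋃ j, K j) = Set.univ)
    (u : M → EuclideanSpace ℝ (Fin n)) (hu : Continuous u)
    (nk : ℕ → ℕ) (hmono : StrictMono nk)
    (hinf : ∀ r : ℝ, ∀ᶠ k in atTop, ∀ p ∈ frontier (K (nk k)), r ≤ ‖u p‖) :
    ∀ C : Set (EuclideanSpace ℝ (Fin n)), IsCompact C →
      ∀ x ∈ u ⁻¹' C, IsCompact (connectedComponentIn (u ⁻¹' C) x) := by
  intro C hC x hx
  -- K is monotone
  have hKmono : Monotone K := monotone_nat_of_le_succ fun j =>
    (hsub j).trans interior_subset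
  -- bound on C
  obtain ⟨R, hR⟩ := isBounded_iff_forall_norm_le.mp hC.isBounded
  -- x is in some K m
  obtain ⟨m, hm⟩ : ∃ m, x ∈ K m := by
    have : x ∈ ⋃ j, K j := hcover ▸ Set.mem_univ x
    exact Set.mem_iUnion.mp this
  -- choose k with nk k ≥ m + 1 and frontier bound R + 1
  have h1 : ∀ᶠ k in atTop, m + 1 ≤ nk k := hmono.tendsto_atTop.eventually_ge_atTop (m + 1)
  obtain ⟨k, hk1, hk2⟩ := (h1.and (hinf (R + 1))).exists
  set N := nk k with hN
  have hxint : x ∈ interior (K N) :=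
    interior_mono (hKmono hk1) (hsub m hm)
  -- the component avoids the frontier of K N
  have hdisj : ∀ p ∈ u ⁻¹' C, p ∉ frontier (K N) := by
    intro p hp hpf
    have h1 := hk2 p hpf
    have h2 := hR _ hp
    linarith
  -- preimage is closed
  have hFclosed : IsClosed (u ⁻¹' C) := hC.isClosed.preimage hu
  set S := connectedComponentIn (u ⁻¹' C) x with hS
  have hSsub : S ⊆ u ⁻¹' C := connectedComponentIn_subset _ _
  have hSconn : IsPreconnected S := isPreconnected_connectedComponentIn
  have hxS : x ∈ S := mem_connectedComponentIn hx
  -- S ⊆ interior (K N) ∪ (closure (K N))ᶜ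
  have hsub2 : S ⊆ interior (K N) ∪ (closure (K N))ᶜ := by
    intro p hp
    by_cases hpK : p ∈ closure (K N)
    · left
      by_contra hpi
      exact hdisj p (hSsub hp) ⟨hpK, hpi⟩
    · right; exact hpK
  have hSK : S ⊆ interior (K N) := by
    refine hSconn.subset_left_of_subset_union isOpen_interior
      isClosed_closure.isOpen_compl ?_ hsub2 ⟨x, hxS, hxint⟩
    exact Set.disjoint_left.mpr fun p hp hpc =>
      hpc (subset_closure (interior_subset hp))
  exact (hcomp N).of_isClosed_subset (isClosed_connectedComponentIn' hFclosed hx)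
    (hSK.trans interior_subset)
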